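/- arXiv:math/0210233 — 2 statements merged into one kernel-verified Lean document; each statement's English description precedes it below -/
import Mathlib

section
/- Let E → M be a smooth vector bundle over a smooth manifold M and let s₁, s₂ : M → E be two smooth sections such that at every point m with s₁(m) = s₂(m), the difference of their vertical derivatives (the linear map T_mM → E_m given by w ↦ vertical part of (T_m s₁ − T_m s₂)(w)) is an isomorphism. Then the images of s₁ and s₂ intersect transversely in the total space E, and the intersection set {m : s₁(m) = s₂(m)} is discrete. -/
open Topology Filter

/-! Transversality is linear algebra: for `a ∈ V` and `b ∈ W`, choosing `u` with
`(s₁' - s₂') u = b - s₂' a` writes `(a, b) = (u, s₁' u) + (a - u, s₂' (a - u))`. Discreteness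
holds because `s₁ - s₂` has injective derivative at each of its zeros, and a map with injective
derivative on a finite-dimensional space takes no value twice near the base point. -/

theorem LinearMap.range_prod_id_sup_range_prod_id_eq_top {R M N : Type*} [Ring R]
    [AddCommGroup M] [Module R M] [AddCommGroup N] [Module R N] (f g : M →ₗ[R] N)
    (h : Function.Surjective (f - g)) :
    range (LinearMap.id.prod f) ⊔ range (LinearMap.id.prod g) = ⊤ := by
  rw [eq_top_iff]
  rintro ⟨a, b⟩ -
  obtain ⟨u, hu⟩ := h (b - g a)
  refine Submodule.mem_sup.2 ⟨(u, f u), ⟨u, rfl⟩, (a - u, g (a - u)), ⟨a - u, rfl⟩, ?_⟩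
  rw [sub_apply, eq_sub_iff_add_eq] at hu
  ext
  · simp
  · simp only [Prod.snd_add, map_sub, ← hu]
    abel

theorem HasFDerivAt.eventually_ne_of_injective {𝕜 E F : Type*} [NontriviallyNormedField 𝕜]
    [CompleteSpace 𝕜] [NormedAddCommGroup E] [NormedSpace 𝕜 E] [FiniteDimensional 𝕜 E]
    [NormedAddCommGroup F] [NormedSpace 𝕜 F] {f : E → F} {f' : E →L[𝕜] F} {x : E}
    (h : HasFDerivAt f f' x) (hf' : Function.Injective f') : ∀ᶠ z in 𝓝[≠] x, f z ≠ f x := by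
  obtain ⟨C, -, hC⟩ := (f' : E →ₗ[𝕜] F).exists_antilipschitzWith (LinearMap.ker_eq_bot.2 hf')
  exact h.eventually_ne ⟨C, hC⟩

theorem discreteTopology_setOf_eq_of_injective_fderiv_sub {𝕜 E F : Type*}
    [NontriviallyNormedField 𝕜] [CompleteSpace 𝕜] [NormedAddCommGroup E] [NormedSpace 𝕜 E]
    [FiniteDimensional 𝕜 E] [NormedAddCommGroup F] [NormedSpace 𝕜 F] {s₁ s₂ : E → F}
    (hs₁ : Differentiable 𝕜 s₁) (hs₂ : Differentiable 𝕜 s₂)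
    (hinj : ∀ m, s₁ m = s₂ m → Function.Injective (fderiv 𝕜 s₁ m - fderiv 𝕜 s₂ m)) :
    DiscreteTopology {m | s₁ m = s₂ m} := by
  rw [discreteTopology_subtype_iff]
  intro m (hm : s₁ m = s₂ m)
  rw [inf_principal_eq_bot]
  have hsub := ((hs₁ m).hasFDerivAt.sub (hs₂ m).hasFDerivAt).eventually_ne_of_injective
    (hinj m hm)
  filter_upwards [hsub] with y hy
  simpa [hm, sub_eq_zero] using hy

theorem stmt1_general {V W : Type*} [NormedAddCommGroup V] [NormedSpace ℝ V] [FiniteDimensional ℝ V]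
    [NormedAddCommGroup W] [NormedSpace ℝ W]
    (s₁ s₂ : V → W) (hs₁ : ContDiff ℝ (⊤ : ℕ∞) s₁) (hs₂ : ContDiff ℝ (⊤ : ℕ∞) s₂)
    (hiso : ∀ m : V, s₁ m = s₂ m →
      Function.Bijective (fun w => fderiv ℝ s₁ m w - fderiv ℝ s₂ m w)) :
    (∀ m : V, s₁ m = s₂ m →
        LinearMap.range
            (LinearMap.prod (LinearMap.id : V →ₗ[ℝ] V) (fderiv ℝ s₁ m).toLinearMap) ⊔
          LinearMap.range
            (LinearMap.prod (LinearMap.id : V →ₗ[ℝ] V) (fderiv ℝ s₂ m).toLinearMap) =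
          (⊤ : Submodule ℝ (V × W))) ∧
      DiscreteTopology {m : V | s₁ m = s₂ m} :=
  ⟨fun m hm => LinearMap.range_prod_id_sup_range_prod_id_eq_top _ _ (hiso m hm).surjective,
    discreteTopology_setOf_eq_of_injective_fderiv_sub (hs₁.differentiable (by simp))
      (hs₂.differentiable (by simp)) fun m hm => (hiso m hm).injective⟩

/-- Two smooth sections of a (trivial model of a) vector bundle whose fiber
dimension equals the base dimension, such that at every coincidence point the difference of
their vertical derivatives is a (linear) isomorphism, have transverse images (the tangent
spaces of their graphs span the tangent space of the total space at every coincidence point)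
and a discrete coincidence set. -/
theorem stmt1 {V W : Type*} [NormedAddCommGroup V] [NormedSpace ℝ V] [FiniteDimensional ℝ V]
    [NormedAddCommGroup W] [NormedSpace ℝ W] [FiniteDimensional ℝ W]
    (hdim : Module.finrank ℝ W = Module.finrank ℝ V)
    (s₁ s₂ : V → W) (hs₁ : ContDiff ℝ (⊤ : ℕ∞) s₁) (hs₂ : ContDiff ℝ (⊤ : ℕ∞) s₂)
    (hiso : ∀ m : V, s₁ m = s₂ m →
      Function.Bijective (fun w => fderiv ℝ s₁ m w - fderiv ℝ s₂ m w)) :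
    (∀ m : V, s₁ m = s₂ m →
        LinearMap.range
            (LinearMap.prod (LinearMap.id : V →ₗ[ℝ] V) (fderiv ℝ s₁ m).toLinearMap) ⊔
          LinearMap.range
            (LinearMap.prod (LinearMap.id : V →ₗ[ℝ] V) (fderiv ℝ s₂ m).toLinearMap) =
          (⊤ : Submodule ℝ (V × W))) ∧
      DiscreteTopology {m : V | s₁ m = s₂ m} :=
  stmt1_general s₁ s₂ hs₁ hs₂ hiso
end

section
/- Let f : V → ℝ, g : V → ℝ be smooth strictly convex functions on a finite-dimensional inner product space V, each proper and bounded below, such that for every t > 0 the function t·f + g has a unique minimum point κ(t) at which its Hessian is positive definite. Then the map t ↦ κ(t) from (0,∞) to V is continuous. -/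
set_option maxHeartbeats 1000000


/-- If `f, g` are smooth strictly convex, proper, bounded-below functions on a
finite-dimensional real inner product space and for every `t > 0` the function `t·f + g` has a
unique minimum point `κ t` with positive definite Hessian there, then `t ↦ κ t` is continuous
on `(0, ∞)`. -/
theorem stmt2 {V : Type*} [NormedAddCommGroup V] [InnerProductSpace ℝ V]
    [FiniteDimensional ℝ V]
    (f g : V → ℝ) (hf : ContDiff ℝ (⊤ : ℕ∞) f) (hg : ContDiff ℝ (⊤ : ℕ∞) g)
    (hfc : StrictConvexOn ℝ Set.univ f) (hgc : StrictConvexOn ℝ Set.univ g)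
    (hfproper : ∀ K : Set ℝ, IsCompact K → IsCompact (f ⁻¹' K))
    (hgproper : ∀ K : Set ℝ, IsCompact K → IsCompact (g ⁻¹' K))
    (hfbdd : BddBelow (Set.range f)) (hgbdd : BddBelow (Set.range g))
    (κ : ℝ → V)
    (hmin : ∀ t : ℝ, 0 < t → IsMinOn (fun x => t * f x + g x) Set.univ (κ t))
    (huniq : ∀ t : ℝ, 0 < t → ∀ y : V,
      IsMinOn (fun x => t * f x + g x) Set.univ y → y = κ t)
    (hhess : ∀ t : ℝ, 0 < t → ∀ v : V, v ≠ 0 →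
      0 < fderiv ℝ (fderiv ℝ (fun x => t * f x + g x)) (κ t) v v) :
    ContinuousOn κ (Set.Ioi 0) := by
  have hfcont : Continuous f := hf.continuous
  have hgcont : Continuous g := hg.continuous
  obtain ⟨af, haf⟩ := hfbdd
  obtain ⟨ag, hag⟩ := hgbdd
  have haf' : ∀ x, af ≤ f x := fun x => haf ⟨x, rfl⟩
  have hag' : ∀ x, ag ≤ g x := fun x => hag ⟨x, rfl⟩
  intro t₀ ht₀
  have ht₀' : (0 : ℝ) < t₀ := ht₀
  set x₀ := κ t₀ with hx₀
  set C : ℝ := 2 * t₀ * |f x₀| + |g x₀| with hC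
  set B : ℝ := max 0 ((C - ag) * (2 / t₀)) with hB
  set K : Set V := f ⁻¹' Set.Icc af B with hK
  have hKcomp : IsCompact K := hfproper _ isCompact_Icc
  -- for t near t₀, the minimizer lies in K
  have hmemK : ∀ t : ℝ, t ∈ Set.Ioo (t₀ / 2) (2 * t₀) → κ t ∈ K := by
    intro t ht
    have ht0 : 0 < t := lt_trans (by positivity) ht.1
    have hle : t * f (κ t) + g (κ t) ≤ t * f x₀ + g x₀ :=
      hmin t ht0 (Set.mem_univ x₀)
    have h1 : t * f x₀ ≤ 2 * t₀ * |f x₀| := by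
      rcases le_or_gt (f x₀) 0 with h | h
      · have : t * f x₀ ≤ 0 := mul_nonpos_of_nonneg_of_nonpos ht0.le h
        have h2 : (0:ℝ) ≤ 2 * t₀ * |f x₀| := by positivity
        linarith
      · have habs : |f x₀| = f x₀ := abs_of_pos h
        nlinarith [ht.2]
    have h2 : g x₀ ≤ |g x₀| := le_abs_self _
    have hfb : t * f (κ t) ≤ C - ag := by
      have := hag' (κ t); simp only [hC]; linarith
    show f (κ t) ∈ Set.Icc af B
    refine ⟨haf' _, ?_⟩
    rcases le_or_gt (f (κ t)) 0 with h | h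
    · exact h.trans (le_max_left _ _)
    · have hCag : 0 ≤ C - ag := le_trans (by positivity) hfb
      have h3 : f (κ t) ≤ (C - ag) / t := by
        rw [le_div_iff₀ ht0]; linarith [hfb]
      refine h3.trans (le_max_of_le_right ?_)
      have h4 : (C - ag) / t ≤ (C - ag) / (t₀ / 2) :=
        div_le_div_of_nonneg_left hCag (by positivity) ht.1.le
      calc (C - ag) / t ≤ (C - ag) / (t₀ / 2) := h4
        _ = (C - ag) * (2 / t₀) := by field_simp
  -- continuity within Ioi 0 at t₀
  show Filter.Tendsto κ (nhdsWithin t₀ (Set.Ioi 0)) (nhds x₀)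
  apply Filter.tendsto_of_subseq_tendsto
  intro ns hns
  have hns' : Filter.Tendsto ns Filter.atTop (nhds t₀) :=
    hns.mono_right nhdsWithin_le_nhds
  have hIoo : ∀ᶠ n in Filter.atTop, ns n ∈ Set.Ioo (t₀ / 2) (2 * t₀) :=
    hns' (Ioo_mem_nhds (by linarith) (by linarith))
  obtain ⟨N, hN⟩ := Filter.eventually_atTop.mp hIoo
  -- the shifted sequence of minimizers lies in the compact set K
  have hwK : ∀ n : ℕ, κ (ns (n + N)) ∈ K := fun n =>
    hmemK _ (hN _ (Nat.le_add_left N n))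
  obtain ⟨x, hxK, φ, hφ, hφtendsto⟩ := hKcomp.tendsto_subseq hwK
  -- the corresponding parameter subsequence tends to t₀
  have hidx : Filter.Tendsto (fun n => φ n + N) Filter.atTop Filter.atTop :=
    (Filter.tendsto_add_atTop_nat N).comp hφ.tendsto_atTop
  have hs : Filter.Tendsto (fun n => ns (φ n + N)) Filter.atTop (nhds t₀) :=
    hns'.comp hidx
  have hspos : ∀ n, 0 < ns (φ n + N) := fun n =>
    lt_trans (by positivity) (hN _ (Nat.le_add_left N (φ n))).1
  have hwx : Filter.Tendsto (fun n => κ (ns (φ n + N))) Filter.atTop (nhds x) :=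
    hφtendsto
  -- the limit x is a minimizer of t₀ • f + g
  have hxmin : IsMinOn (fun z => t₀ * f z + g z) Set.univ x := by
    rw [isMinOn_univ_iff]
    intro y
    have hfl : Filter.Tendsto (fun n => f (κ (ns (φ n + N)))) Filter.atTop (nhds (f x)) :=
      (hfcont.continuousAt.tendsto).comp hwx
    have hgl : Filter.Tendsto (fun n => g (κ (ns (φ n + N)))) Filter.atTop (nhds (g x)) :=
      (hgcont.continuousAt.tendsto).comp hwx
    refine le_of_tendsto_of_tendsto' ((hs.mul hfl).add hgl)
      ((hs.mul tendsto_const_nhds).add tendsto_const_nhds) ?_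
    intro n
    exact hmin _ (hspos n) (Set.mem_univ y)
  have hxeq : x = x₀ := huniq t₀ ht₀' x hxmin
  exact ⟨fun n => φ n + N, hxeq ▸ hwx⟩
end
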